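/- There exists a universal constant C > 0 such that for every real α with 1 < α < 5/4, setting λ = (α − 1)^{−1/4} and e(r) = 2λ²(1 + cos(r)²) / (λ² − (λ² − 1)cos(r)²)², one has 2^α π ∫₀^π (1 + e(r))^α sin(r) dr < 6^α · 2π + C (α − 1)^{1/2}. -/

import Mathlib

/-!
The integrand is compared with a majorant that has an elementary primitive. Write
`Q(r) = L - (L - 1) cos² r = cos² r + L sin² r ≥ 1` with `L = λ²`. Then `e ≤ 4L`, and
`e ≤ P := e + 1/((L - 1) Q)`, where `(1 + P) sin r` is the derivative of
`-cos r - (2L - 1) cos r / ((L - 1) Q(r))`, so `∫₀^π (1 + P) sin = 6 + 2/(L - 1)`.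
Splitting `(1 + e)^α = (1 + e)^(α-1) (1 + e) ≤ (1 + 4L)^(α-1) (1 + P)` gives
`∫₀^π (1 + e)^α sin ≤ (1 + 4L)^(α-1) (6 + 2/(L - 1))`. With `s = (α - 1)^(1/2) = 1/L` the first
factor is at most `exp (4s) ≤ 1 + 16s`, the second at most `6 + 4s`, and `6 · 2^α π ≤ 6^α · 2π`.
-/

open Real

theorem rpow_le_rpow_sub_one_mul_self {y M α : ℝ} (hy : 0 < y) (hyM : y ≤ M) (hα : 1 ≤ α) :
    y ^ α ≤ M ^ (α - 1) * y := by
  calc y ^ α = y ^ (α - 1) * y := by rw [rpow_sub_one hy.ne', div_mul_cancel₀ _ hy.ne']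
    _ ≤ M ^ (α - 1) * y := by gcongr

theorem rpow_le_exp_mul_sub_one {y ε : ℝ} (hy : 0 < y) (hε : 0 ≤ ε) :
    y ^ ε ≤ exp (ε * (y - 1)) := by
  rw [rpow_def_of_pos hy, mul_comm]
  gcongr
  exact log_le_sub_one_of_pos hy

theorem exp_le_one_add_four_mul {x : ℝ} (h0 : 0 ≤ x) (h2 : x ≤ 2) : exp x ≤ 1 + 4 * x := by
  have hexp2 : exp 2 < 8 := by
    have := exp_one_lt_d9
    rw [show (2 : ℝ) = 1 + 1 by norm_num, exp_add]
    nlinarith [exp_pos 1]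
  have hchord := convexOn_exp.2 (Set.mem_univ 0) (Set.mem_univ 2) (by linarith : 0 ≤ 1 - x / 2)
    (by linarith : 0 ≤ x / 2) (by ring)
  simp only [smul_eq_mul, mul_zero, zero_add, exp_zero, mul_one,
    div_mul_cancel₀ x two_ne_zero] at hchord
  nlinarith

theorem rpow_neg_one_div_four_sq {x : ℝ} (hx : 0 ≤ x) :
    (x ^ (-(1 / 4) : ℝ)) ^ 2 = (x ^ ((1 : ℝ) / 2))⁻¹ := by
  rw [← rpow_natCast, ← rpow_mul hx, ← rpow_neg hx]
  norm_num

theorem rpow_one_div_two_sq {x : ℝ} (hx : 0 ≤ x) : (x ^ ((1 : ℝ) / 2)) ^ 2 = x := by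
  rw [← sqrt_eq_rpow, sq_sqrt hx]

theorem six_mul_two_rpow_le_two_mul_six_rpow {α : ℝ} (hα : 1 ≤ α) :
    6 * 2 ^ α ≤ 2 * (6 : ℝ) ^ α := by
  have h3α : (3 : ℝ) ≤ 3 ^ α := by simpa using rpow_le_rpow_of_exponent_le (by norm_num) hα
  rw [show (6 : ℝ) ^ α = 2 ^ α * 3 ^ α by rw [← mul_rpow zero_le_two zero_le_three]; norm_num]
  nlinarith [rpow_pos_of_pos two_pos α]

noncomputable section

def bubbleDenom (L r : ℝ) : ℝ := L - (L - 1) * cos r ^ 2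

def energyDensity (L r : ℝ) : ℝ := 2 * L * (1 + cos r ^ 2) / bubbleDenom L r ^ 2

def comparisonDensity (L r : ℝ) : ℝ :=
  (2 * L - 1) * (L + (L - 1) * cos r ^ 2) / ((L - 1) * bubbleDenom L r ^ 2)

def comparisonPrimitive (L r : ℝ) : ℝ :=
  -cos r - (2 * L - 1) * cos r / ((L - 1) * bubbleDenom L r)

end

section

variable {L : ℝ}

theorem one_le_bubbleDenom (hL : 1 ≤ L) (r : ℝ) : 1 ≤ bubbleDenom L r := by
  unfold bubbleDenom
  nlinarith [cos_sq_le_one r]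

theorem bubbleDenom_pos (hL : 1 ≤ L) (r : ℝ) : 0 < bubbleDenom L r :=
  one_pos.trans_le (one_le_bubbleDenom hL r)

@[simp] theorem bubbleDenom_zero (L : ℝ) : bubbleDenom L 0 = 1 := by
  simp [bubbleDenom]

@[simp] theorem bubbleDenom_pi (L : ℝ) : bubbleDenom L π = 1 := by
  simp [bubbleDenom]

theorem continuous_bubbleDenom (L : ℝ) : Continuous (bubbleDenom L) := by
  unfold bubbleDenom
  fun_prop

theorem energyDensity_nonneg (hL : 1 ≤ L) (r : ℝ) : 0 ≤ energyDensity L r := by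
  unfold energyDensity
  have := bubbleDenom_pos hL r
  positivity

theorem energyDensity_le (hL : 1 ≤ L) (r : ℝ) : energyDensity L r ≤ 4 * L := by
  have hQ := one_le_bubbleDenom hL r
  unfold energyDensity
  rw [div_le_iff₀ (by positivity)]
  nlinarith [cos_sq_le_one r, one_le_pow₀ (n := 2) hQ]

theorem comparisonDensity_sub_energyDensity (hL : 1 < L) (r : ℝ) :
    comparisonDensity L r - energyDensity L r = 1 / ((L - 1) * bubbleDenom L r) := by
  have hQ := (bubbleDenom_pos hL.le r).ne'
  have hL1 : L - 1 ≠ 0 := sub_ne_zero.2 hL.ne'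
  unfold comparisonDensity energyDensity
  field_simp
  unfold bubbleDenom
  ring

theorem energyDensity_le_comparisonDensity (hL : 1 < L) (r : ℝ) :
    energyDensity L r ≤ comparisonDensity L r := by
  have := comparisonDensity_sub_energyDensity hL r
  have : 0 < 1 / ((L - 1) * bubbleDenom L r) :=
    one_div_pos.2 (mul_pos (sub_pos.2 hL) (bubbleDenom_pos hL.le r))
  linarith

theorem continuous_energyDensity (hL : 1 ≤ L) : Continuous (energyDensity L) :=
  ((continuous_const.mul (continuous_const.add (continuous_cos.pow 2))).div
    ((continuous_bubbleDenom L).pow 2)) fun r => pow_ne_zero 2 (bubbleDenom_pos hL r).ne'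

theorem continuous_comparisonDensity (hL : 1 < L) : Continuous (comparisonDensity L) :=
  ((continuous_const.mul (continuous_const.add (continuous_const.mul (continuous_cos.pow 2)))).div
    (continuous_const.mul ((continuous_bubbleDenom L).pow 2))) fun r =>
      mul_ne_zero (sub_ne_zero.2 hL.ne') (pow_ne_zero 2 (bubbleDenom_pos hL.le r).ne')

theorem hasDerivAt_comparisonPrimitive (hL : 1 < L) (r : ℝ) :
    HasDerivAt (comparisonPrimitive L) ((1 + comparisonDensity L r) * sin r) r := by
  have hQ := (bubbleDenom_pos hL.le r).ne'
  have hL1 : L - 1 ≠ 0 := sub_ne_zero.2 hL.ne'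
  have hden : HasDerivAt (fun x => (L - 1) * bubbleDenom L x)
      ((L - 1) * (0 - (L - 1) * (2 * cos r ^ 1 * -sin r))) r :=
    ((hasDerivAt_const r L).sub (((hasDerivAt_cos r).pow 2).const_mul (L - 1))).const_mul (L - 1)
  refine ((hasDerivAt_cos r).neg.sub
    (((hasDerivAt_cos r).const_mul (2 * L - 1)).div hden (mul_ne_zero hL1 hQ))).congr_deriv ?_
  unfold comparisonDensity
  field_simp
  unfold bubbleDenom
  ring

theorem integral_one_add_comparisonDensity_mul_sin (hL : 1 < L) :
    ∫ r in (0 : ℝ)..π, (1 + comparisonDensity L r) * sin r = 6 + 2 / (L - 1) := by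
  have hP := continuous_comparisonDensity hL
  rw [intervalIntegral.integral_eq_sub_of_hasDerivAt
    (fun r _ => hasDerivAt_comparisonPrimitive hL r)
    ((by fun_prop : Continuous _).intervalIntegrable _ _)]
  have hL1 : L - 1 ≠ 0 := sub_ne_zero.2 hL.ne'
  simp only [comparisonPrimitive, cos_pi, cos_zero, bubbleDenom_pi, bubbleDenom_zero]
  field_simp
  ring

theorem integral_one_add_energyDensity_rpow_mul_sin_le {α : ℝ} (hL : 1 < L) (hα : 1 ≤ α) :
    ∫ r in (0 : ℝ)..π, (1 + energyDensity L r) ^ α * sin r ≤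
      (1 + 4 * L) ^ (α - 1) * (6 + 2 / (L - 1)) := by
  have hbase (r : ℝ) : 0 < 1 + energyDensity L r := by linarith [energyDensity_nonneg hL.le r]
  have hcont : Continuous fun r => (1 + energyDensity L r) ^ α * sin r :=
    ((continuous_const.add (continuous_energyDensity hL.le)).rpow_const
      fun r => Or.inl (hbase r).ne').mul continuous_sin
  have hP := continuous_comparisonDensity hL
  have hcont' : Continuous fun r =>
      (1 + 4 * L) ^ (α - 1) * ((1 + comparisonDensity L r) * sin r) := by
    fun_prop
  calc ∫ r in (0 : ℝ)..π, (1 + energyDensity L r) ^ α * sin r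
      ≤ ∫ r in (0 : ℝ)..π, (1 + 4 * L) ^ (α - 1) * ((1 + comparisonDensity L r) * sin r) := by
        refine intervalIntegral.integral_mono_on pi_pos.le (hcont.intervalIntegrable 0 π)
          (hcont'.intervalIntegrable 0 π) fun r hr => ?_
        rw [← mul_assoc]
        gcongr
        · exact sin_nonneg_of_nonneg_of_le_pi hr.1 hr.2
        · calc (1 + energyDensity L r) ^ α ≤ (1 + 4 * L) ^ (α - 1) * (1 + energyDensity L r) :=
                rpow_le_rpow_sub_one_mul_self (hbase r) (by linarith [energyDensity_le hL.le r]) hα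
            _ ≤ (1 + 4 * L) ^ (α - 1) * (1 + comparisonDensity L r) := by
                gcongr; exact energyDensity_le_comparisonDensity hL r
    _ = (1 + 4 * L) ^ (α - 1) * (6 + 2 / (L - 1)) := by
        rw [intervalIntegral.integral_const_mul, integral_one_add_comparisonDensity_mul_sin hL]

end

theorem one_add_four_mul_inv_rpow_sq_mul_le {s : ℝ} (hs0 : 0 < s) (hs : s < 1 / 2) :
    (1 + 4 * s⁻¹) ^ (s ^ 2) * (6 + 2 / (s⁻¹ - 1)) ≤ 6 + 132 * s := by
  have hfirst : (1 + 4 * s⁻¹) ^ (s ^ 2) ≤ 1 + 16 * s := by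
    calc (1 + 4 * s⁻¹) ^ (s ^ 2) ≤ exp (s ^ 2 * (1 + 4 * s⁻¹ - 1)) :=
          rpow_le_exp_mul_sub_one (by positivity) (by positivity)
      _ = exp (4 * s) := by field_simp; ring_nf
      _ ≤ 1 + 16 * s := by
          linarith [exp_le_one_add_four_mul (x := 4 * s) (by linarith) (by linarith)]
  have h1s : 0 < 1 - s := by linarith
  have hsecond : 2 * s / (1 - s) ≤ 4 * s := by
    rw [div_le_iff₀ h1s]
    nlinarith
  rw [show s⁻¹ - 1 = (1 - s) / s by field_simp, div_div_eq_mul_div]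
  calc (1 + 4 * s⁻¹) ^ (s ^ 2) * (6 + 2 * s / (1 - s)) ≤ (1 + 16 * s) * (6 + 4 * s) := by
        gcongr
    _ ≤ 6 + 132 * s := by nlinarith

/-- Proposition 3.1: there is a universal constant `C > 0` such that for `1 < α < 5/4`,
with `λ = (α − 1)^(−1/4)` and energy density
`e(r) = 2λ²(1 + cos² r)/(λ² − (λ² − 1)cos² r)²`, the α-energy
`2^α π ∫₀^π (1 + e(r))^α sin r dr` is less than `6^α · 2π + C(α − 1)^(1/2)`. -/
theorem upper_bound_comparison_map :
    ∃ C > (0 : ℝ), ∀ α : ℝ, 1 < α → α < 5 / 4 →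
      ∀ l : ℝ, l = (α - 1) ^ (-(1 / 4) : ℝ) →
        (2 : ℝ) ^ α * π * (∫ r in (0 : ℝ)..π,
            (1 + 2 * l ^ 2 * (1 + cos r ^ 2) /
              (l ^ 2 - (l ^ 2 - 1) * cos r ^ 2) ^ 2) ^ α * sin r)
          < (6 : ℝ) ^ α * (2 * π) + C * (α - 1) ^ ((1 : ℝ) / 2) := by
  refine ⟨132 * 4 * 4, by norm_num, fun α hα1 hα2 l hl => ?_⟩
  show 2 ^ α * π * (∫ r in (0 : ℝ)..π, (1 + energyDensity (l ^ 2) r) ^ α * sin r) < _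
  set s := (α - 1) ^ ((1 : ℝ) / 2)
  have hs0 : 0 < s := rpow_pos_of_pos (by linarith) _
  have hα : α - 1 = s ^ 2 := (rpow_one_div_two_sq (by linarith)).symm
  have hL : l ^ 2 = s⁻¹ := by rw [hl, rpow_neg_one_div_four_sq (by linarith)]
  have hs : s < 1 / 2 := by nlinarith
  have hL1 : 1 < l ^ 2 := by rw [hL]; exact one_lt_inv₀ hs0 |>.2 (by linarith)
  have h2α : 2 ^ α < (4 : ℝ) := by
    calc (2 : ℝ) ^ α < 2 ^ (2 : ℝ) := rpow_lt_rpow_of_exponent_lt one_lt_two (by linarith)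
      _ = 4 := by norm_num
  calc 2 ^ α * π * (∫ r in (0 : ℝ)..π, (1 + energyDensity (l ^ 2) r) ^ α * sin r)
      ≤ 2 ^ α * π * (6 + 132 * s) := by
        gcongr
        calc _ ≤ (1 + 4 * l ^ 2) ^ (α - 1) * (6 + 2 / (l ^ 2 - 1)) :=
              integral_one_add_energyDensity_rpow_mul_sin_le hL1 hα1.le
          _ ≤ 6 + 132 * s := by rw [hL, hα]; exact one_add_four_mul_inv_rpow_sq_mul_le hs0 hs
    _ < 6 ^ α * (2 * π) + 132 * 4 * 4 * s := by
        have h2απ : 2 ^ α * π < 4 * 4 := mul_lt_mul h2α pi_lt_four.le pi_pos (by norm_num)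
        nlinarith [six_mul_two_rpow_le_two_mul_six_rpow hα1.le, pi_pos,
          mul_lt_mul_of_pos_right h2απ hs0]
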